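/- Inner capacity is countably subadditive in the strengthened form: for any set Q⊂ℝⁿ and any universally measurable sets U_j⊂ℝⁿ (j∈ℕ), c_*(⋃_j (Q∩U_j)) ≤ Σ_j c_*(Q∩U_j). -/

import Mathlib

open MeasureTheory ENNReal Filter Topology Set

noncomputable section

/-- Euclidean space ℝⁿ. -/
abbrev Rn (n : ℕ) := EuclideanSpace ℝ (Fin n)

/-- The Riesz kernel κ_α(x,y) = |x-y|^(α-n), valued in ℝ≥0∞. -/
def rieszKernel (n : ℕ) (α : ℝ) (x y : Rn n) : ℝ≥0∞ :=
  ENNReal.ofReal (‖x - y‖ ^ (α - (n : ℝ)))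

/-- The Riesz potential U^μ(x) = ∫ κ_α(x,y) dμ(y). -/
def pot (n : ℕ) (α : ℝ) (μ : Measure (Rn n)) (x : Rn n) : ℝ≥0∞ :=
  ∫⁻ y, rieszKernel n α x y ∂μ

/-- The mutual energy I(μ,ν) = ∬ κ_α d(μ⊗ν). -/
def mEnergy (n : ℕ) (α : ℝ) (μ ν : Measure (Rn n)) : ℝ≥0∞ :=
  ∫⁻ x, pot n α ν x ∂μ

/-- The energy I(μ) of a positive measure. -/
def energy (n : ℕ) (α : ℝ) (μ : Measure (Rn n)) : ℝ≥0∞ := mEnergy n α μ μ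

/-- The inner Riesz capacity c_*(A): the supremum of total masses of positive measures
concentrated on a compact subset of A whose potential is everywhere ≤ 1. -/
def innerCap (n : ℕ) (α : ℝ) (A : Set (Rn n)) : ℝ≥0∞ :=
  ⨆ (μ : Measure (Rn n)) (_ : (∃ K : Set (Rn n), IsCompact K ∧ K ⊆ A ∧ μ Kᶜ = 0) ∧
      ∀ x, pot n α μ x ≤ 1), μ Set.univ

/-- A property holds nearly everywhere on A: the exceptional subset of A has
inner capacity zero. -/
def NearlyOn (n : ℕ) (α : ℝ) (A : Set (Rn n)) (P : Rn n → Prop) : Prop :=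
  innerCap n α {x | x ∈ A ∧ ¬ P x} = 0

/-- E⁺(A): finite-energy positive measures concentrated on A. -/
def EplusOn (n : ℕ) (α : ℝ) (A : Set (Rn n)) : Set (Measure (Rn n)) :=
  {μ | μ Aᶜ = 0 ∧ energy n α μ < ⊤}

/-- The squared energy distance ‖μ - ν‖² = I(μ) + I(ν) - 2 I(μ,ν). -/
def enDist2 (n : ℕ) (α : ℝ) (μ ν : Measure (Rn n)) : ℝ :=
  (energy n α μ).toReal + (energy n α ν).toReal - 2 * (mEnergy n α μ ν).toReal

/-- The energy (strong) distance ‖μ - ν‖. -/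
def enDist (n : ℕ) (α : ℝ) (μ ν : Measure (Rn n)) : ℝ := Real.sqrt (enDist2 n α μ ν)

/-- The Gauss functional I_f(μ) = ‖μ‖² + 2∫ f dμ for the external field f = -U^ω. -/
def gaussF (n : ℕ) (α : ℝ) (ω μ : Measure (Rn n)) : ℝ :=
  (energy n α μ).toReal - 2 * (mEnergy n α μ ω).toReal

/-- The Gauss functional I_f(μ) = ‖μ‖² + 2∫ f dμ for a general external field f. -/
def gaussW (n : ℕ) (α : ℝ) (f : Rn n → ℝ) (μ : Measure (Rn n)) : ℝ :=
  (energy n α μ).toReal + 2 * ∫ y, f y ∂μ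

/-- The cone E⁺(A) is closed in the strong (energy) topology. -/
def StronglyClosed (n : ℕ) (α : ℝ) (A : Set (Rn n)) : Prop :=
  ∀ μ : Measure (Rn n), energy n α μ < ⊤ →
    (∀ ε : ℝ, 0 < ε → ∃ ν ∈ EplusOn n α A, enDist n α μ ν < ε) → μ ∈ EplusOn n α A

/-- E'(A): the strong closure of E⁺(A) within the cone of finite-energy positive measures. -/
def EclosOn (n : ℕ) (α : ℝ) (A : Set (Rn n)) : Set (Measure (Rn n)) :=
  {μ | energy n α μ < ⊤ ∧ ∀ ε : ℝ, 0 < ε → ∃ ν ∈ EplusOn n α A, enDist n α μ ν < ε}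

/-- The outer Riesz capacity c^*(A). -/
def outerCap (n : ℕ) (α : ℝ) (A : Set (Rn n)) : ℝ≥0∞ :=
  ⨅ (O : Set (Rn n)) (_ : IsOpen O ∧ A ⊆ O), innerCap n α O

/-- A is inner α-thin at infinity (Wiener-type criterion). -/
def ThinAtInf (n : ℕ) (α : ℝ) (A : Set (Rn n)) : Prop :=
  ∃ r : ℝ, 1 < r ∧
    ∑' j : ℕ, innerCap n α (A ∩ {x | r ^ j ≤ ‖x‖ ∧ ‖x‖ < r ^ (j + 1)}) /
      ENNReal.ofReal (r ^ ((j : ℝ) * ((n : ℝ) - α))) < ⊤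

/-- ωA is (a measure with the characteristic properties of) the inner balayage of ω onto A:
it is concentrated on A, has finite energy, and its potential equals that of ω
nearly everywhere on A. -/
def IsBalOf (n : ℕ) (α : ℝ) (A : Set (Rn n)) (ω ωA : Measure (Rn n)) : Prop :=
  ωA Aᶜ = 0 ∧ energy n α ωA < ⊤ ∧
    NearlyOn n α A (fun x => pot n α ωA x = pot n α ω x)


/-!
An admissible measure `μ` for the union lives on a compact `K`; its potential is finite at a
point off `K`, where the kernel is bounded below on `K`, so `μ` is finite and hence inner
regular. Thus `μ (K ∩ U j)` is approximated by `μ F` with `F ⊆ Q ∩ U j` compact, and `μ`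
restricted to `F` is admissible for `Q ∩ U j`; countable subadditivity of `μ` concludes.
-/

section InnerRegularity

variable {X ι : Type*} [TopologicalSpace X] [MeasurableSpace X] {μ : Measure X}
  [μ.InnerRegularCompactLTTop]

theorem MeasureTheory.NullMeasurableSet.measure_le_of_forall_isCompact_le {A : Set X}
    (hA : NullMeasurableSet A μ) (hμA : μ A ≠ ⊤) {c : ℝ≥0∞}
    (hc : ∀ F, IsCompact F → F ⊆ A → μ F ≤ c) : μ A ≤ c := by
  obtain ⟨t, htA, ht, hμt⟩ := hA.exists_measurable_subset_ae_eq
  rw [← measure_congr hμt] at hμA ⊢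
  rw [ht.measure_eq_iSup_isCompact_of_ne_top hμA]
  exact iSup₂_le fun F hFt => iSup_le fun hF => hc F hF (hFt.trans htA)

theorem measure_iUnion_le_tsum_of_forall_isCompact_le [Countable ι] [IsFiniteMeasure μ]
    {V : ι → Set X} (hV : ∀ i, NullMeasurableSet (V i) μ) {c : ι → ℝ≥0∞}
    (hc : ∀ i F, IsCompact F → F ⊆ V i → μ F ≤ c i) : μ (⋃ i, V i) ≤ ∑' i, c i :=
  (measure_iUnion_le V).trans <| ENNReal.tsum_le_tsum fun i =>
    (hV i).measure_le_of_forall_isCompact_le (measure_ne_top μ _) (hc i)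

end InnerRegularity

section RieszPotential

variable {n : ℕ} {α : ℝ}

theorem pot_mono {μ ν : Measure (Rn n)} (hμν : μ ≤ ν) (x : Rn n) :
    pot n α μ x ≤ pot n α ν x :=
  lintegral_mono' hμν le_rfl

theorem measure_le_innerCap {μ : Measure (Rn n)} (hpot : ∀ x, pot n α μ x ≤ 1)
    {A F : Set (Rn n)} (hF : IsCompact F) (hFA : F ⊆ A) : μ F ≤ innerCap n α A := by
  refine le_iSup₂_of_le (μ.restrict F) ⟨⟨F, hF, hFA, ?_⟩, fun x => ?_⟩ ?_
  · rw [Measure.restrict_apply hF.isClosed.measurableSet.compl, compl_inter_self, measure_empty]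
  · exact (pot_mono Measure.restrict_le_self x).trans (hpot x)
  · rw [Measure.restrict_apply_univ]

theorem exists_pos_le_rieszKernel (hαn : α ≤ n) {K : Set (Rn n)} (hK : IsCompact K)
    {x : Rn n} (hx : x ∉ K) : ∃ c ≠ 0, ∀ y ∈ K, c ≤ rieszKernel n α x y := by
  obtain ⟨R, hKR⟩ := hK.isBounded.subset_closedBall x
  have hR : 0 < max R 1 := lt_max_of_lt_right one_pos
  refine ⟨ENNReal.ofReal (max R 1 ^ (α - n)),
    (ENNReal.ofReal_pos.mpr (Real.rpow_pos_of_pos hR _)).ne', fun y hy => ?_⟩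
  have hxy : 0 < ‖x - y‖ := norm_pos_iff.mpr (sub_ne_zero.mpr fun h => hx (h ▸ hy))
  have hyR : ‖x - y‖ ≤ max R 1 := by
    rw [← dist_eq_norm, dist_comm]
    exact (hKR hy).trans (le_max_left R 1)
  exact ENNReal.ofReal_le_ofReal (Real.rpow_le_rpow_of_nonpos hxy hyR (by linarith))

theorem isFiniteMeasure_of_pot_ne_top (hαn : α ≤ n) {μ : Measure (Rn n)}
    {K : Set (Rn n)} (hK : IsCompact K) (hμK : μ Kᶜ = 0) {x : Rn n} (hx : x ∉ K)
    (hpot : pot n α μ x ≠ ⊤) :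
    IsFiniteMeasure μ := by
  obtain ⟨c, hc, hcK⟩ := exists_pos_le_rieszKernel hαn hK hx
  have hK_meas : MeasurableSet K := hK.isClosed.measurableSet
  have hcμ : c * μ K ≤ pot n α μ x :=
    calc c * μ K = ∫⁻ _ in K, c ∂μ := (setLIntegral_const K c).symm
      _ ≤ ∫⁻ y in K, rieszKernel n α x y ∂μ := setLIntegral_mono' hK_meas hcK
      _ ≤ pot n α μ x := setLIntegral_le_lintegral K _
  refine ⟨?_⟩
  rw [← measure_congr (ae_eq_univ.mpr hμK)]
  exact ENNReal.lt_top_of_mul_ne_top_right (ne_top_of_le_ne_top hpot hcμ) hc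

end RieszPotential

theorem innerCap_countably_subadditive_general
    (n : ℕ) (α : ℝ) (hn : 2 ≤ n) (hαn : α < n)
    (Q : Set (Rn n)) (U : ℕ → Set (Rn n))
    (hU : ∀ j, ∀ ρ : Measure (Rn n), NullMeasurableSet (U j) ρ) :
    innerCap n α (⋃ j, Q ∩ U j) ≤ ∑' j, innerCap n α (Q ∩ U j) := by
  refine iSup₂_le fun μ ⟨⟨K, hK, hKQU, hμK⟩, hpot⟩ => ?_
  have : Nonempty (Fin n) := ⟨⟨0, by omega⟩⟩
  obtain ⟨x, hx⟩ := (ne_univ_iff_exists_notMem K).mp hK.ne_univ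
  have hμ_fin :=
    isFiniteMeasure_of_pot_ne_top hαn.le hK hμK hx (ne_top_of_le_ne_top one_ne_top (hpot x))
  have hKQ : K ⊆ Q := hKQU.trans (iUnion_subset fun j => inter_subset_left)
  have hK_cover : K = ⋃ j, K ∩ U j := by
    rw [← inter_iUnion, eq_comm, inter_eq_left]
    exact hKQU.trans (iUnion_mono fun j => inter_subset_right)
  calc μ univ = μ K := measure_congr (ae_eq_univ.mpr hμK).symm
    _ = μ (⋃ j, K ∩ U j) := congrArg μ hK_cover
    _ ≤ ∑' j, innerCap n α (Q ∩ U j) :=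
      measure_iUnion_le_tsum_of_forall_isCompact_le
        (fun j => hK.isClosed.measurableSet.nullMeasurableSet.inter (hU j μ))
        fun j F hF hFK =>
          measure_le_innerCap hpot hF (hFK.trans (inter_subset_inter_left _ hKQ))

/-- strengthened countable subadditivity of inner capacity:
c_*(⋃ⱼ (Q ∩ Uⱼ)) ≤ Σⱼ c_*(Q ∩ Uⱼ) for arbitrary Q and universally measurable Uⱼ. -/
theorem innerCap_countably_subadditive
    (n : ℕ) (α : ℝ) (hn : 2 ≤ n) (hα0 : 0 < α) (hαn : α < n)
    (Q : Set (Rn n)) (U : ℕ → Set (Rn n))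
    (hU : ∀ j, ∀ ρ : Measure (Rn n), NullMeasurableSet (U j) ρ) :
    innerCap n α (⋃ j, Q ∩ U j) ≤ ∑' j, innerCap n α (Q ∩ U j) :=
  innerCap_countably_subadditive_general n α hn hαn Q U hU
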